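/- Let ω > 0, V > 0, φ ∈ (−π/2, π/2) with φ ≠ 0, and for each t let M(t) ∈ ℝ^{2×2} be the matrix with columns V·S_{φ,ab}(t) and −S_{0,ab}(t). Then there exists δ > 0 such that for all t, M(t)ᵀM(t) ≥ δ·I₂ in the positive semidefinite order, i.e. |M(t)·x|² ≥ δ·|x|² for all x ∈ ℝ²; in particular M(t) is persistently exciting (∫_t^{t+T} M(s)M(s)ᵀ ds ≥ δT·I₂ for all t and T > 0). -/
import Mathlib


open Real Matrix intervalIntegral

/-- The phase-`a` and phase-`b` components of the balanced three-phase vector `S_φ(t)`. -/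
noncomputable def twoPhase (ω φ t : ℝ) : Fin 2 → ℝ :=
  ![Real.sqrt (2 / 3) * Real.sin (ω * t + φ),
    Real.sqrt (2 / 3) * Real.sin (ω * t + φ - 2 * π / 3)]

/-- The steady-state reduced regressor matrix, with columns `V·S_{φ,ab}(t)` and
`−S_{0,ab}(t)`. -/
noncomputable def steadyRegressor (ω V φ t : ℝ) : Matrix (Fin 2) (Fin 2) ℝ :=
  Matrix.of fun r : Fin 2 => ![V * twoPhase ω φ t r, -(twoPhase ω 0 t r)]

/-- Entrywise integral `∫_t^{t+T} M(s)·M(s)ᵀ ds`. -/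
noncomputable def excitationMatrix (ω V φ t T : ℝ) : Matrix (Fin 2) (Fin 2) ℝ :=
  Matrix.of fun r c =>
    ∫ s in t..(t + T), (steadyRegressor ω V φ s * (steadyRegressor ω V φ s)ᵀ) r c

/-- Cauchy–Binet style bound for `2×2` matrices: `det(M)²·|x|² ≤ ‖M‖_F²·|Mx|²`. -/
lemma alg_det_bound (a b c d x0 x1 C : ℝ) (hF : a^2+b^2+c^2+d^2 ≤ C) :
    (a*d-b*c)^2*(x0^2+x1^2) ≤ C*((a*x0+b*x1)^2+(c*x0+d*x1)^2) := by
  nlinarith [sq_nonneg (b*(a*x0+b*x1)+d*(c*x0+d*x1)), sq_nonneg (a*(a*x0+b*x1)+c*(c*x0+d*x1)),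
    mul_nonneg (sub_nonneg.2 hF) (add_nonneg (sq_nonneg (a*x0+b*x1)) (sq_nonneg (c*x0+d*x1)))]

/-- The key trigonometric identity: the determinant of the regressor is constant. -/
lemma trigkey (θ φ : ℝ) :
    Real.sin (θ+φ) * Real.sin (θ - 2*π/3) - Real.sin (θ+φ-2*π/3) * Real.sin θ
      = -(Real.sqrt 3/2) * Real.sin φ := by
  have hs3 : Real.sin (2*π/3) = Real.sqrt 3 / 2 := by
    rw [show (2*π/3 : ℝ) = π - π/3 by ring, Real.sin_pi_sub, Real.sin_pi_div_three]
  have h5 := Real.sin_sq_add_cos_sq θ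
  rw [Real.sin_sub (θ+φ), Real.sin_sub θ, Real.sin_add θ φ, Real.cos_add θ φ, hs3]
  linear_combination (-(Real.sqrt 3/2) * Real.sin φ) * h5

set_option maxHeartbeats 1000000 in
theorem steady_regressor_persistently_exciting (ω V φ : ℝ) (hω : 0 < ω) (hV : 0 < V)
    (hφ₁ : φ ∈ Set.Ioo (-(π / 2)) (π / 2)) (hφ₂ : φ ≠ 0) :
    ∃ δ : ℝ, 0 < δ ∧
      (∀ t : ℝ, ∀ x : Fin 2 → ℝ,
        δ * ∑ j : Fin 2, x j ^ 2 ≤ ∑ j : Fin 2, (steadyRegressor ω V φ t *ᵥ x) j ^ 2) ∧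
      (∀ t : ℝ, ∀ T : ℝ, 0 < T → ∀ x : Fin 2 → ℝ,
        δ * T * ∑ j : Fin 2, x j ^ 2 ≤ x ⬝ᵥ (excitationMatrix ω V φ t T *ᵥ x)) := by
  have hπ := Real.pi_pos
  have hsin : Real.sin φ ≠ 0 := by
    intro h
    exact hφ₂ ((Real.sin_eq_zero_iff_of_lt_of_lt (by linarith [hφ₁.1]) (by linarith [hφ₁.2])).1 h)
  have hsq : (0:ℝ) < Real.sin φ ^ 2 := by positivity
  have hk : Real.sqrt (2/3) ^ 2 = 2/3 := Real.sq_sqrt (by norm_num)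
  have h3 : Real.sqrt 3 ^ 2 = 3 := Real.sq_sqrt (by norm_num)
  -- the constant determinant
  have hdet : ∀ θ : ℝ, (V*(Real.sqrt (2/3)*Real.sin (θ+φ))) * (-(Real.sqrt (2/3)*Real.sin (θ-2*π/3)))
      - (-(Real.sqrt (2/3)*Real.sin θ)) * (V*(Real.sqrt (2/3)*Real.sin (θ+φ-2*π/3))) = V*(Real.sqrt 3/3)*Real.sin φ := by
    intro θ
    have h := trigkey θ φ
    linear_combination (-(V)*Real.sqrt (2/3)^2) * h + (V * Real.sin φ * Real.sqrt 3 / 2) * hk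
  -- the uniform bound on the Frobenius norm
  have hbound : ∀ θ : ℝ, (V*(Real.sqrt (2/3)*Real.sin (θ+φ)))^2 + (-(Real.sqrt (2/3)*Real.sin θ))^2
      + (V*(Real.sqrt (2/3)*Real.sin (θ+φ-2*π/3)))^2 + (-(Real.sqrt (2/3)*Real.sin (θ-2*π/3)))^2 ≤ 2*(V^2+1) := by
    intro θ
    nlinarith [Real.sin_sq_le_one (θ+φ), Real.sin_sq_le_one θ, Real.sin_sq_le_one (θ+φ-2*π/3),
      Real.sin_sq_le_one (θ-2*π/3), hk, sq_nonneg V,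
      mul_nonneg (sq_nonneg V) (sub_nonneg.2 (Real.sin_sq_le_one (θ+φ))),
      mul_nonneg (sq_nonneg V) (sub_nonneg.2 (Real.sin_sq_le_one (θ+φ-2*π/3)))]
  -- abstract eigenvalue bound
  have habs : ∀ a b c d x0 x1 : ℝ, a*d - b*c = V*(Real.sqrt 3/3)*Real.sin φ →
      a^2+b^2+c^2+d^2 ≤ 2*(V^2+1) →
      V^2 * Real.sin φ ^ 2 / (6*(V^2+1)) * (x0^2+x1^2) ≤ (a*x0+b*x1)^2 + (c*x0+d*x1)^2 := by
    intro a b c d x0 x1 he hF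
    have he2 : (a*d-b*c)^2 = V^2*Real.sin φ^2/3 := by
      rw [he]; linear_combination (V^2*Real.sin φ^2/9) * h3
    have h := alg_det_bound a b c d x0 x1 (2*(V^2+1)) hF
    rw [div_mul_eq_mul_div, div_le_iff₀ (by positivity : (0:ℝ) < 6*(V^2+1))]
    nlinarith [h, he2]
  refine ⟨V^2 * Real.sin φ ^ 2 / (6 * (V^2+1)), by positivity, ?_, ?_⟩
  · intro t x
    simp only [steadyRegressor, twoPhase, Matrix.mulVec, dotProduct, Fin.sum_univ_two,
      Matrix.of_apply, Matrix.cons_val', Matrix.cons_val_zero, Matrix.cons_val_one,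
      Matrix.head_cons, Matrix.empty_val', Matrix.cons_val_fin_one, Matrix.head_fin_const,
      add_zero]
    have h := habs (V*(Real.sqrt (2/3)*Real.sin (ω*t+φ))) (-(Real.sqrt (2/3)*Real.sin (ω*t))) (V*(Real.sqrt (2/3)*Real.sin (ω*t+φ-2*π/3)))
      (-(Real.sqrt (2/3)*Real.sin (ω*t-2*π/3))) (x 0) (x 1) (hdet (ω*t)) (hbound (ω*t))
    nlinarith [h]
  · intro t T hT x
    have hNcont : ∀ r c : Fin 2,
        Continuous fun s => (steadyRegressor ω V φ s * (steadyRegressor ω V φ s)ᵀ) r c := by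
      intro r c
      fin_cases r <;> fin_cases c <;>
        simp only [steadyRegressor, twoPhase, Matrix.mul_apply, Matrix.transpose_apply,
          Fin.sum_univ_two, Matrix.of_apply, Matrix.cons_val', Matrix.cons_val_zero,
          Matrix.cons_val_one, Matrix.head_cons, Matrix.empty_val', Matrix.cons_val_fin_one,
          Matrix.head_fin_const, add_zero, Fin.isValue, Fin.zero_eta, Fin.mk_one] <;>
        fun_prop
    have hi : ∀ r c : Fin 2, IntervalIntegrable
        (fun s => (steadyRegressor ω V φ s * (steadyRegressor ω V φ s)ᵀ) r c)
        MeasureTheory.volume t (t+T) := fun r c => (hNcont r c).intervalIntegrable _ _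
    have hswap : x ⬝ᵥ (excitationMatrix ω V φ t T *ᵥ x) = ∫ s in t..t+T,
        (x 0 * ((steadyRegressor ω V φ s * (steadyRegressor ω V φ s)ᵀ) 0 0 * x 0
          + (steadyRegressor ω V φ s * (steadyRegressor ω V φ s)ᵀ) 0 1 * x 1)
        + x 1 * ((steadyRegressor ω V φ s * (steadyRegressor ω V φ s)ᵀ) 1 0 * x 0
          + (steadyRegressor ω V φ s * (steadyRegressor ω V φ s)ᵀ) 1 1 * x 1)) := by
      simp only [excitationMatrix, dotProduct, Matrix.mulVec, Fin.sum_univ_two,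
        Matrix.of_apply]
      rw [← intervalIntegral.integral_mul_const, ← intervalIntegral.integral_mul_const,
        ← intervalIntegral.integral_mul_const, ← intervalIntegral.integral_mul_const,
        ← intervalIntegral.integral_add ((hi 0 0).mul_const _) ((hi 0 1).mul_const _),
        ← intervalIntegral.integral_add ((hi 1 0).mul_const _) ((hi 1 1).mul_const _),
        ← intervalIntegral.integral_const_mul, ← intervalIntegral.integral_const_mul,
        ← intervalIntegral.integral_add]
      · exact (((hi 0 0).mul_const _).add ((hi 0 1).mul_const _)).const_mul _
      · exact (((hi 1 0).mul_const _).add ((hi 1 1).mul_const _)).const_mul _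
    have hg : Continuous fun s =>
        (x 0 * ((steadyRegressor ω V φ s * (steadyRegressor ω V φ s)ᵀ) 0 0 * x 0
          + (steadyRegressor ω V φ s * (steadyRegressor ω V φ s)ᵀ) 0 1 * x 1)
        + x 1 * ((steadyRegressor ω V φ s * (steadyRegressor ω V φ s)ᵀ) 1 0 * x 0
          + (steadyRegressor ω V φ s * (steadyRegressor ω V φ s)ᵀ) 1 1 * x 1)) :=
      (continuous_const.mul (((hNcont 0 0).mul continuous_const).add
        ((hNcont 0 1).mul continuous_const))).add
      (continuous_const.mul (((hNcont 1 0).mul continuous_const).add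
        ((hNcont 1 1).mul continuous_const)))
    have hptwise : ∀ s : ℝ, V^2 * Real.sin φ ^ 2 / (6 * (V^2+1)) * (x 0 ^2 + x 1 ^2) ≤
        (x 0 * ((steadyRegressor ω V φ s * (steadyRegressor ω V φ s)ᵀ) 0 0 * x 0
          + (steadyRegressor ω V φ s * (steadyRegressor ω V φ s)ᵀ) 0 1 * x 1)
        + x 1 * ((steadyRegressor ω V φ s * (steadyRegressor ω V φ s)ᵀ) 1 0 * x 0
          + (steadyRegressor ω V φ s * (steadyRegressor ω V φ s)ᵀ) 1 1 * x 1)) := by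
      intro s
      have hdet' : (V*(Real.sqrt (2/3)*Real.sin (ω*s+φ))) * (-(Real.sqrt (2/3)*Real.sin (ω*s-2*π/3)))
          - (V*(Real.sqrt (2/3)*Real.sin (ω*s+φ-2*π/3))) * (-(Real.sqrt (2/3)*Real.sin (ω*s)))
          = V*(Real.sqrt 3/3)*Real.sin φ := by linear_combination hdet (ω*s)
      have hF' : (V*(Real.sqrt (2/3)*Real.sin (ω*s+φ)))^2 + (V*(Real.sqrt (2/3)*Real.sin (ω*s+φ-2*π/3)))^2
          + (-(Real.sqrt (2/3)*Real.sin (ω*s)))^2 + (-(Real.sqrt (2/3)*Real.sin (ω*s-2*π/3)))^2 ≤ 2*(V^2+1) := by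
        nlinarith [hbound (ω*s)]
      have h := habs (V*(Real.sqrt (2/3)*Real.sin (ω*s+φ))) (V*(Real.sqrt (2/3)*Real.sin (ω*s+φ-2*π/3)))
        (-(Real.sqrt (2/3)*Real.sin (ω*s))) (-(Real.sqrt (2/3)*Real.sin (ω*s-2*π/3))) (x 0) (x 1) hdet' hF'
      simp only [steadyRegressor, twoPhase, Matrix.mul_apply, Matrix.transpose_apply,
        Fin.sum_univ_two, Matrix.of_apply, Matrix.cons_val', Matrix.cons_val_zero,
        Matrix.cons_val_one, Matrix.head_cons, Matrix.empty_val', Matrix.cons_val_fin_one,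
        Matrix.head_fin_const, add_zero]
      nlinarith [h]
    rw [hswap]
    have hmono := intervalIntegral.integral_mono_on (μ := MeasureTheory.volume) (by linarith : t ≤ t+T)
      (intervalIntegrable_const) (hg.intervalIntegrable _ _) (fun s _ => hptwise s)
    rw [intervalIntegral.integral_const, smul_eq_mul] at hmono
    simp only [Fin.sum_univ_two]
    nlinarith [hmono]
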